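/- Let A be the adjacency matrix of a (2ℓ,d,δ)-expander scaled by d^{-1/p}, let x ∈ ℝ^n be k-sparse, supported on [k], with |x_1| ≥ … ≥ |x_k| and ‖x‖_p = 1, and let D_b, D'_b be the secondary and tertiary entries of block B_b. Then Σ_{(i,j) ∈ D_b ∪ D'_b} A_{ij}|x_j| ≤ 3δ(dk)^{1−1/p}. -/

import Mathlib

/-- Column `j` (numbered from `0`) lies in block `B_b = {(b-1)ℓ, …, bℓ - 1}`. -/
def InBlock (ℓ b j : ℕ) : Prop := (b - 1) * ℓ ≤ j ∧ j < b * ℓ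

/-- Secondary entries of block `b`. -/
def SecondaryEntries {n m : ℕ} (S : Fin n → Finset (Fin m)) (ℓ b : ℕ) :
    Set (Fin m × Fin n) :=
  {ij | ij.1 ∈ S ij.2 ∧ InBlock ℓ b (ij.2 : ℕ) ∧
    ∃ j' : Fin n, InBlock ℓ b (j' : ℕ) ∧ ij.1 ∈ S j' ∧ (j' : ℕ) < (ij.2 : ℕ)}

/-- Tertiary entries of block `b`. -/
def TertiaryEntries {n m : ℕ} (S : Fin n → Finset (Fin m)) (ℓ b k : ℕ) :
    Set (Fin m × Fin n) :=
  {ij | ij.1 ∈ S ij.2 ∧ b * ℓ ≤ (ij.2 : ℕ) ∧ (ij.2 : ℕ) < ((k + ℓ - 1) / ℓ) * ℓ ∧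
    ∃ j₀ : Fin n, InBlock ℓ b (j₀ : ℕ) ∧ ij.1 ∈ S j₀}

/-!
Group the entries by column. Among the first `N` columns, `D_b` has at most `δ d N` entries and
`D'_b` at most `2 δ d N`. Both bounds count collisions `S j ∩ N({j' ∈ T | j' < j})` inside a set
`T` of at most `2ℓ` columns; there are exactly `d |T| - |N(T)| ≤ δ d |T|` of them by expansion.
For `D_b`, `T` is an initial part of `B_b`; for `D'_b`, it is `B_b` together with a window of at
most `ℓ` later columns, and the windows tile the columns after `B_b`. As `|x_j|` is nonincreasing,
Abel summation turns these prefix bounds into `Σ A_ij |x_j| ≤ 3 δ d ^ (1 - 1/p) ‖x‖₁`, and Hölder's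
inequality gives `‖x‖₁ ≤ k ^ (1 - 1/p)`.
-/

open Finset

theorem Finset.sum_mul_le_mul_sum_of_prefix_sum_le {ι : Type*} [LinearOrder ι] {a w : ι → ℝ}
    {C : ℝ} (T : Finset ι) (hw : AntitoneOn w T) (hw0 : ∀ j ∈ T, 0 ≤ w j)
    (ha : ∀ j ∈ T, ∑ i ∈ T with i ≤ j, a i ≤ C * #{i ∈ T | i ≤ j}) :
    ∑ j ∈ T, a j * w j ≤ C * ∑ j ∈ T, w j := by
  classical
  induction T using Finset.induction_on_max generalizing w with
  | empty => simp
  | insert m T hlt ih =>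
    have hmT : m ∉ T := fun h => lt_irrefl m (hlt m h)
    have hprefix : ∀ j ∈ T, {i ∈ insert m T | i ≤ j} = {i ∈ T | i ≤ j} := fun j hj => by
      rw [filter_insert, if_neg (not_le.2 (hlt j hj))]
    have hall : {i ∈ insert m T | i ≤ m} = insert m T :=
      filter_true_of_mem fun i hi => (mem_insert.1 hi).elim le_of_eq fun h => (hlt i h).le
    -- Peel off the smallest weight `w m` and recurse on `w - w m`, which still is antitone.
    have hrest := ih (w := fun i => w i - w m)
      (fun i hi j hj hij =>
        sub_le_sub_right (hw (mem_insert_of_mem hi) (mem_insert_of_mem hj) hij) _)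
      (fun j hj => sub_nonneg.2 (hw (mem_insert_of_mem hj) (mem_insert_self m T) (hlt j hj).le))
      (fun j hj => by simpa [hprefix j hj] using ha j (mem_insert_of_mem hj))
    have htotal := ha m (mem_insert_self m T)
    rw [hall, sum_insert hmT, card_insert_of_notMem hmT] at htotal
    push_cast at htotal
    simp only [mul_sub, sum_sub_distrib, ← sum_mul, sum_const, nsmul_eq_mul] at hrest
    rw [sum_insert hmT, sum_insert hmT]
    nlinarith [mul_le_mul_of_nonneg_right htotal (hw0 m (mem_insert_self m T))]

theorem Finset.card_biUnion_add_sum_card_inter_biUnion_lt {ι α : Type*} [LinearOrder ι]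
    [DecidableEq α] (S : ι → Finset α) (T : Finset ι) :
    #(T.biUnion S) + ∑ j ∈ T, #(S j ∩ {i ∈ T | i < j}.biUnion S) = ∑ j ∈ T, #(S j) := by
  classical
  induction T using Finset.induction_on_max with
  | empty => simp
  | insert m T hlt ih =>
    have hmT : m ∉ T := fun h => lt_irrefl m (hlt m h)
    have hprefix : ∀ j ∈ T, {i ∈ insert m T | i < j} = {i ∈ T | i < j} := fun j hj => by
      rw [filter_insert, if_neg (not_lt.2 (hlt j hj).le)]
    have hall : {i ∈ insert m T | i < m} = T := by
      rw [filter_insert, if_neg (lt_irrefl m), filter_true_of_mem hlt]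
    rw [sum_insert hmT, sum_insert hmT, hall, sum_congr rfl fun j hj => by rw [hprefix j hj],
      biUnion_insert, ← ih]
    have := card_union_add_card_inter (S m) (T.biUnion S)
    omega

theorem Finset.sum_abs_le_card_rpow_mul {ι : Type*} (s : Finset ι) (f : ι → ℝ) {p : ℝ}
    (hp : 1 < p) :
    ∑ i ∈ s, |f i| ≤ (#s : ℝ) ^ (1 - 1 / p) * (∑ i ∈ s, |f i| ^ p) ^ (1 / p) := by
  have hpq := Real.HolderConjugate.conjExponent hp
  have h := Real.inner_le_Lp_mul_Lq s (fun i => |f i|) (fun _ => 1) hpq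
  simp only [mul_one, abs_abs, abs_one, Real.one_rpow, sum_const, nsmul_eq_mul] at h
  rw [one_div (Real.conjExponent p), ← hpq.one_sub_inv, ← one_div] at h
  linarith

theorem Fin.card_le_of_forall_val_mem_Ico {n a c : ℕ} (s : Finset (Fin n))
    (h : ∀ j ∈ s, (j : ℕ) ∈ Ico a c) : #s ≤ c - a := by
  rw [← Nat.card_Ico a c, ← card_map Fin.valEmbedding]
  refine card_le_card fun x hx => ?_
  obtain ⟨j, hj, rfl⟩ := mem_map.1 hx
  exact h j hj

theorem sum_abs_le_rpow_of_sum_rpow_eq_one {n k : ℕ} {p : ℝ} (hp : 1 < p) (x : Fin n → ℝ)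
    (hsupp : ∀ j : Fin n, k ≤ (j : ℕ) → x j = 0) (hnorm : ∑ j, |x j| ^ p = 1) :
    ∑ j, |x j| ≤ (k : ℝ) ^ (1 - 1 / p) := by
  set s : Finset (Fin n) := {j | (j : ℕ) < k}
  have hout : ∀ j ∉ s, x j = 0 := fun j hj => hsupp j (by simpa [s] using hj)
  have hsum : ∑ j ∈ s, |x j| = ∑ j, |x j| :=
    sum_subset (subset_univ s) fun j _ hj => by simp [hout j hj]
  have hnorm' : ∑ j ∈ s, |x j| ^ p = 1 := hnorm ▸ sum_subset (subset_univ s) fun j _ hj => by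
    simp [hout j hj, Real.zero_rpow (by positivity : p ≠ 0)]
  have hs : #s ≤ k := by
    simpa using Fin.card_le_of_forall_val_mem_Ico s (a := 0) fun j hj =>
      mem_Ico.2 ⟨Nat.zero_le _, by simpa [s] using hj⟩
  have hholder := sum_abs_le_card_rpow_mul s x hp
  rw [hsum, hnorm', Real.one_rpow, mul_one] at hholder
  have hp' : 1 / p ≤ 1 := (div_le_one (by positivity)).2 hp.le
  exact hholder.trans (Real.rpow_le_rpow (by positivity) (by exact_mod_cast hs) (by linarith))

theorem sum_indicator_le_mul_sum_of_prefix_sum_le {α : Type*} [Fintype α] {n : ℕ}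
    (E : Set (α × Fin n)) [DecidablePred (· ∈ E)] {w : Fin n → ℝ} (hw : Antitone w)
    (hw0 : ∀ j, 0 ≤ w j) {C : ℝ}
    (hE : ∀ N : ℕ, ∑ j : Fin n with j.val < N, (#{i | (i, j) ∈ E} : ℝ) ≤ C * N) :
    ∑ ij, E.indicator (fun ij => w ij.2) ij ≤ C * ∑ j, w j := by
  have hcol : ∀ j, ∑ i, E.indicator (fun ij => w ij.2) (i, j) = #{i | (i, j) ∈ E} * w j := by
    intro j
    simp [Set.indicator_apply, sum_ite]
  rw [Fintype.sum_prod_type_right]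
  simp only [hcol]
  refine sum_mul_le_mul_sum_of_prefix_sum_le univ (hw.antitoneOn _) (fun j _ => hw0 j)
    fun j _ => ?_
  have hprefix : ∀ i : Fin n, i.val < j.val + 1 ↔ i ≤ j := fun i => by
    rw [Fin.le_def, Nat.lt_succ_iff]
  simpa [hprefix, filter_ge_eq_Iic] using hE (j + 1)

/-- The paper's `(L, d, δ)`-expander, given by the neighbourhoods `S j` of its left vertices. -/
def IsExpander {ι α : Type*} [DecidableEq α] (S : ι → Finset α) (L d : ℕ) (δ : ℝ) : Prop :=
  (∀ j, #(S j) = d) ∧ ∀ T : Finset ι, #T ≤ L → (1 - δ) * d * #T ≤ (#(T.biUnion S) : ℝ)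

section Expander

variable {ι α : Type*} [LinearOrder ι] [DecidableEq α] {S : ι → Finset α} {L d : ℕ} {δ : ℝ}

theorem IsExpander.sum_card_inter_biUnion_lt_le (hS : IsExpander S L d δ) {T : Finset ι}
    (hT : #T ≤ L) :
    ∑ j ∈ T, (#(S j ∩ {i ∈ T | i < j}.biUnion S) : ℝ) ≤ δ * d * #T := by
  have h := card_biUnion_add_sum_card_inter_biUnion_lt S T
  simp only [hS.1, sum_const, smul_eq_mul] at h
  have h' : (#(T.biUnion S) : ℝ) + ∑ j ∈ T, (#(S j ∩ {i ∈ T | i < j}.biUnion S) : ℝ) =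
      #T * d := by
    exact_mod_cast h
  linarith [hS.2 T hT]

theorem IsExpander.sum_card_inter_biUnion_le_of_forall_lt (hS : IsExpander S L d δ)
    (hδ : 0 ≤ δ) {B W : Finset ι} (hBW : ∀ i ∈ B, ∀ j ∈ W, i < j) (hcard : #B + #W ≤ L) :
    ∑ j ∈ W, (#(S j ∩ B.biUnion S) : ℝ) ≤ δ * d * (#B + #W) :=
  calc ∑ j ∈ W, (#(S j ∩ B.biUnion S) : ℝ)
      ≤ ∑ j ∈ W, (#(S j ∩ {i ∈ B ∪ W | i < j}.biUnion S) : ℝ) := by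
        gcongr with j hj
        exact fun i hi => mem_filter.2 ⟨mem_union_left W hi, hBW i hi j hj⟩
    _ ≤ ∑ j ∈ B ∪ W, (#(S j ∩ {i ∈ B ∪ W | i < j}.biUnion S) : ℝ) :=
        sum_le_sum_of_subset_of_nonneg subset_union_right fun _ _ _ => by positivity
    _ ≤ δ * d * #(B ∪ W) := hS.sum_card_inter_biUnion_lt_le ((card_union_le B W).trans hcard)
    _ ≤ δ * d * (#B + #W) := by gcongr; exact_mod_cast card_union_le B W

end Expander

instance (ℓ b j : ℕ) : Decidable (InBlock ℓ b j) := by unfold InBlock; infer_instance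

def block (n ℓ b : ℕ) : Finset (Fin n) := {j | InBlock ℓ b j}

theorem card_block_le (n ℓ b : ℕ) : #(block n ℓ b) ≤ ℓ := by
  refine (Fin.card_le_of_forall_val_mem_Ico _ fun j hj => mem_Ico.2 (mem_filter.1 hj).2).trans ?_
  rw [← Nat.sub_mul]
  exact (Nat.mul_le_mul_right ℓ (by omega : b - (b - 1) ≤ 1)).trans (one_mul ℓ).le

section Entries

variable {n m d ℓ : ℕ} {δ : ℝ} {S : Fin n → Finset (Fin m)}

open scoped Classical in
theorem sum_card_secondaryEntries_le (hS : IsExpander S (2 * ℓ) d δ) (hδ : 0 ≤ δ) (b N : ℕ) :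
    ∑ j : Fin n with j.val < N, (#{i | (i, j) ∈ SecondaryEntries S ℓ b} : ℝ) ≤ δ * d * N := by
  set T : Finset (Fin n) := {j | InBlock ℓ b j ∧ j.val < N}
  have hTN : #T ≤ N := by
    simpa using Fin.card_le_of_forall_val_mem_Ico T (a := 0) fun j hj =>
      mem_Ico.2 ⟨Nat.zero_le _, (mem_filter.1 hj).2.2⟩
  have hTℓ : #T ≤ ℓ :=
    (card_le_card fun j hj => mem_filter.2 ⟨mem_univ j, (mem_filter.1 hj).2.1⟩).trans
      (card_block_le n ℓ b)
  have hcol : ∀ j ∈ T, ({i | (i, j) ∈ SecondaryEntries S ℓ b} : Finset (Fin m)) ⊆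
      S j ∩ {i ∈ T | i < j}.biUnion S := by
    intro j hj i hi
    obtain ⟨hiS, -, j', hj'B, hij', hj'j⟩ := (mem_filter.1 hi).2
    exact mem_inter.2 ⟨hiS, mem_biUnion.2 ⟨j', mem_filter.2
      ⟨mem_filter.2 ⟨mem_univ j', hj'B, hj'j.trans (mem_filter.1 hj).2.2⟩, hj'j⟩, hij'⟩⟩
  calc ∑ j : Fin n with j.val < N, (#{i | (i, j) ∈ SecondaryEntries S ℓ b} : ℝ)
      = ∑ j ∈ T, (#{i | (i, j) ∈ SecondaryEntries S ℓ b} : ℝ) := by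
        refine (sum_subset (fun j hj => mem_filter.2 ⟨mem_univ j, (mem_filter.1 hj).2.2⟩)
          fun j hjN hjT => ?_).symm
        simp only [Nat.cast_eq_zero, card_eq_zero, filter_eq_empty_iff]
        exact fun i _ hi => hjT (mem_filter.2 ⟨mem_univ j, hi.2.1, (mem_filter.1 hjN).2⟩)
    _ ≤ ∑ j ∈ T, (#(S j ∩ {i ∈ T | i < j}.biUnion S) : ℝ) := by
        gcongr with j hj; exact hcol j hj
    _ ≤ δ * d * #T := hS.sum_card_inter_biUnion_lt_le (by omega)
    _ ≤ δ * d * N := by gcongr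

theorem sum_card_inter_biUnion_block_le (hS : IsExpander S (2 * ℓ) d δ) (hδ : 0 ≤ δ)
    (hℓ : 1 ≤ ℓ) {b : ℕ} (hb : 1 ≤ b) (N : ℕ) :
    ∑ j : Fin n with b * ℓ ≤ j.val ∧ j.val < N, (#(S j ∩ (block n ℓ b).biUnion S) : ℝ) ≤
      2 * δ * d * N := by
  induction N using Nat.strong_induction_on with
  | _ N ih =>
  by_cases hN : N ≤ b * ℓ
  · refine (sum_eq_zero fun j hj => ?_).trans_le (by positivity)
    have := (mem_filter.1 hj).2
    omega
  have hℓN : ℓ ≤ N := by nlinarith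
  set W : Finset (Fin n) := {j | b * ℓ ≤ j.val ∧ j.val < N ∧ N - ℓ ≤ j.val}
  have hsplit :
      ∑ j : Fin n with b * ℓ ≤ j.val ∧ j.val < N, (#(S j ∩ (block n ℓ b).biUnion S) : ℝ) =
        ∑ j : Fin n with b * ℓ ≤ j.val ∧ j.val < N - ℓ, (#(S j ∩ (block n ℓ b).biUnion S) : ℝ)
        + ∑ j ∈ W, (#(S j ∩ (block n ℓ b).biUnion S) : ℝ) := by
    rw [← sum_filter_add_sum_filter_not _ fun j : Fin n => j.val < N - ℓ, filter_filter,
      filter_filter]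
    congr 2 <;> ext j <;> simp only [mem_filter, mem_univ, true_and, W] <;> omega
  have hWℓ : #W ≤ ℓ := (Fin.card_le_of_forall_val_mem_Ico W (a := N - ℓ) (c := N) fun j hj =>
      mem_Ico.2 ⟨(mem_filter.1 hj).2.2.2, (mem_filter.1 hj).2.2.1⟩).trans (by omega)
  have hBℓ := card_block_le n ℓ b
  have hwindow := hS.sum_card_inter_biUnion_le_of_forall_lt hδ (B := block n ℓ b) (W := W)
    (fun i hi j hj => by
      have := (mem_filter.1 hi).2.2
      have := (mem_filter.1 hj).2.1
      exact Fin.lt_def.2 (by omega))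
    (by omega)
  have hBW : (#(block n ℓ b) : ℝ) + #W ≤ 2 * ℓ := by norm_cast; omega
  rw [hsplit]
  calc _ ≤ 2 * δ * d * ↑(N - ℓ) + δ * d * (2 * ℓ) :=
        add_le_add (ih (N - ℓ) (by omega)) (hwindow.trans (by gcongr))
    _ = 2 * δ * d * N := by push_cast [Nat.cast_sub hℓN]; ring

open scoped Classical in
theorem sum_card_tertiaryEntries_le (hS : IsExpander S (2 * ℓ) d δ) (hδ : 0 ≤ δ) (hℓ : 1 ≤ ℓ)
    {b : ℕ} (hb : 1 ≤ b) (k N : ℕ) :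
    ∑ j : Fin n with j.val < N, (#{i | (i, j) ∈ TertiaryEntries S ℓ b k} : ℝ) ≤
      2 * δ * d * N := by
  refine le_trans ?_ (sum_card_inter_biUnion_block_le hS hδ hℓ hb N)
  rw [← sum_subset (s₁ := {j : Fin n | b * ℓ ≤ j.val ∧ j.val < N})
    (fun j hj => mem_filter.2 ⟨mem_univ j, (mem_filter.1 hj).2.2⟩) fun j hjN hj => ?_]
  · gcongr with j
    intro i hi
    obtain ⟨hiS, -, -, j₀, hj₀B, hij₀⟩ := (mem_filter.1 hi).2
    exact mem_inter.2 ⟨hiS, mem_biUnion.2 ⟨j₀, mem_filter.2 ⟨mem_univ j₀, hj₀B⟩, hij₀⟩⟩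
  · simp only [Nat.cast_eq_zero, card_eq_zero, filter_eq_empty_iff]
    exact fun i _ hi => hj (mem_filter.2 ⟨mem_univ j, hi.2.1, (mem_filter.1 hjN).2⟩)

end Entries

theorem expander_secondary_tertiary_mass_general
    (n m d ℓ k b : ℕ) (δ p : ℝ) (hδ0 : 0 < δ)
    (hp1 : 1 < p)
    (hℓ : 1 ≤ ℓ)
    (hb1 : 1 ≤ b)
    (S : Fin n → Finset (Fin m))
    (hdeg : ∀ j, (S j).card = d)
    (hexp : ∀ T : Finset (Fin n), T.card ≤ 2 * ℓ →
      ((1 - δ) * d * T.card : ℝ) ≤ ((T.biUnion S).card : ℝ))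
    (x : Fin n → ℝ)
    (hsupp : ∀ j : Fin n, k ≤ (j : ℕ) → x j = 0)
    (hsorted : ∀ j j' : Fin n, (j : ℕ) ≤ (j' : ℕ) → |x j'| ≤ |x j|)
    (hnorm : ∑ j, |x j| ^ p = 1) :
    ∑ ij : Fin m × Fin n,
        Set.indicator (SecondaryEntries S ℓ b ∪ TertiaryEntries S ℓ b k)
          (fun ij => (d : ℝ) ^ (-(1 / p)) * |x ij.2|) ij ≤
      3 * δ * ((d : ℝ) * k) ^ (1 - 1 / p) := by
  classical
  have hS : IsExpander S (2 * ℓ) d δ := ⟨hdeg, hexp⟩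
  set c : ℝ := (d : ℝ) ^ (-(1 / p))
  have hw : Antitone fun j => c * |x j| := fun i j hij =>
    mul_le_mul_of_nonneg_left (hsorted i j hij) (by positivity)
  have hdisj : Disjoint (SecondaryEntries S ℓ b) (TertiaryEntries S ℓ b k) :=
    Set.disjoint_left.2 fun ij hsec hter => absurd hsec.2.1.2 (not_lt.2 hter.2.1)
  have hsec := sum_indicator_le_mul_sum_of_prefix_sum_le (SecondaryEntries S ℓ b) hw
    (fun j => by positivity) (sum_card_secondaryEntries_le hS hδ0.le b)
  have hter := sum_indicator_le_mul_sum_of_prefix_sum_le (TertiaryEntries S ℓ b k) hw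
    (fun j => by positivity) (sum_card_tertiaryEntries_le hS hδ0.le hℓ hb1 k)
  have hl1 := sum_abs_le_rpow_of_sum_rpow_eq_one hp1 x hsupp hnorm
  have hcd : c * d = (d : ℝ) ^ (1 - 1 / p) := by
    have hp' : 1 / p < 1 := (div_lt_one (by positivity)).2 hp1
    rw [← Real.rpow_add_one' (Nat.cast_nonneg d) (by linarith)]
    ring_nf
  simp only [Set.indicator_union_of_disjoint hdisj, sum_add_distrib]
  calc _ ≤ δ * d * ∑ j, c * |x j| + 2 * δ * d * ∑ j, c * |x j| := add_le_add hsec hter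
    _ = 3 * δ * (c * d) * ∑ j, |x j| := by rw [← mul_sum]; ring
    _ ≤ 3 * δ * (c * d) * (k : ℝ) ^ (1 - 1 / p) := by gcongr
    _ = 3 * δ * ((d : ℝ) * k) ^ (1 - 1 / p) := by
        rw [Real.mul_rpow (Nat.cast_nonneg d) (Nat.cast_nonneg k), hcd]; ring

/-- For the `d^(-1/p)`-scaled adjacency matrix of a `(2ℓ,d,δ)`-expander and a `k`-sparse
unit vector `x` supported on the first `k` coordinates with nonincreasing absolute values,
`Σ_{(i,j) ∈ D_b ∪ D'_b} A_{ij} |x_j| ≤ 3δ (dk)^(1-1/p)`. -/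
theorem expander_secondary_tertiary_mass
    (n m d ℓ k b : ℕ) (δ p : ℝ) (hδ0 : 0 < δ) (hδ1 : δ < 1 / 2)
    (hp1 : 1 < p) (hp2 : p < 2)
    (hd : 1 ≤ d) (hℓ : 1 ≤ ℓ) (hk : 1 ≤ k) (hkn : k ≤ n)
    (hb1 : 1 ≤ b) (hb2 : b ≤ (k + ℓ - 1) / ℓ)
    (S : Fin n → Finset (Fin m))
    (hdeg : ∀ j, (S j).card = d)
    (hexp : ∀ T : Finset (Fin n), T.card ≤ 2 * ℓ →
      ((1 - δ) * d * T.card : ℝ) ≤ ((T.biUnion S).card : ℝ))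
    (x : Fin n → ℝ)
    (hsupp : ∀ j : Fin n, k ≤ (j : ℕ) → x j = 0)
    (hsorted : ∀ j j' : Fin n, (j : ℕ) ≤ (j' : ℕ) → |x j'| ≤ |x j|)
    (hnorm : ∑ j, |x j| ^ p = 1) :
    ∑ ij : Fin m × Fin n,
        Set.indicator (SecondaryEntries S ℓ b ∪ TertiaryEntries S ℓ b k)
          (fun ij => (d : ℝ) ^ (-(1 / p)) * |x ij.2|) ij ≤
      3 * δ * ((d : ℝ) * k) ^ (1 - 1 / p) :=
  expander_secondary_tertiary_mass_general n m d ℓ k b δ p hδ0 hp1 hℓ hb1 S hdeg hexp x hsupp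
    hsorted hnorm
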